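/- arXiv:1704.06929 — 2 statements merged into one kernel-verified Lean document; each statement's English description precedes it below -/
import Mathlib

section
/- Let C(r,t|r₀) = (1/(4πr r₀))·(1/√(4πDt))·(exp(−(r−r₀)²/(4Dt)) − exp(−(r+r₀−2r_r)²/(4Dt))) for r ≥ r_r. Then the absorption rate K(t|r₀) = 4π r_r² D · ∂C/∂r evaluated at r = r_r equals (r_r/r₀)·(1/√(4πDt))·((r₀−r_r)/t)·exp(−(r₀−r_r)²/(4Dt)). -/
/-!
The concentration is a `1/r` prefactor times a difference of a Gaussian and its mirror image in
the sphere `r = r_r`; this difference vanishes at `r = r_r`, so by the product rule only the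
prefactor times the derivative of the difference survives. At `r = r_r` the source and image
Gaussians have equal values and opposite slopes, so that derivative is twice the slope of one of
them, `(r₀ - r_r)/(D t) · exp(-(r₀ - r_r)²/(4 D t))`.
-/

open Real

theorem HasDerivAt.mul_of_continuousAt_of_eq_zero {𝕜 : Type*} [NontriviallyNormedField 𝕜]
    {f g : 𝕜 → 𝕜} {g' x : 𝕜} (hg : HasDerivAt g g' x) (hf : ContinuousAt f x) (hgx : g x = 0) :
    HasDerivAt (fun y => f y * g y) (f x * g') x := by
  rw [hasDerivAt_iff_tendsto_slope] at hg ⊢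
  have hslope : slope (fun y => f y * g y) x = fun y => f y * slope g x y := by
    ext y
    simp only [slope_def_field, hgx, mul_zero, sub_zero]
    ring
  rw [hslope]
  exact (hf.tendsto.mono_left nhdsWithin_le_nhds).mul hg

theorem hasDerivAt_exp_neg_sq_sub_div (a s x : ℝ) :
    HasDerivAt (fun r => exp (-(r - a) ^ 2 / s))
      (exp (-(x - a) ^ 2 / s) * (-(2 * (x - a)) / s)) x :=
  HasDerivAt.exp (by simpa using (((hasDerivAt_id x).sub_const a).pow 2).neg.div_const s)

theorem exp_neg_sq_sub_div_sub_reflect_self (a b s : ℝ) :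
    exp (-(b - a) ^ 2 / s) - exp (-(b + a - 2 * b) ^ 2 / s) = 0 := by
  rw [sub_eq_zero]
  ring_nf

theorem hasDerivAt_exp_neg_sq_sub_div_sub_reflect (a b s : ℝ) :
    HasDerivAt (fun r => exp (-(r - a) ^ 2 / s) - exp (-(r + a - 2 * b) ^ 2 / s))
      (4 * (a - b) / s * exp (-(a - b) ^ 2 / s)) b := by
  have hreflect (r : ℝ) : r + a - 2 * b = r - (2 * b - a) := by ring
  simp only [hreflect]
  refine ((hasDerivAt_exp_neg_sq_sub_div a s b).sub
    (hasDerivAt_exp_neg_sq_sub_div (2 * b - a) s b)).congr_deriv ?_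
  rw [show b - (2 * b - a) = a - b by ring, show (b - a) ^ 2 = (a - b) ^ 2 by ring]
  ring

theorem absorption_rate_eq_general
    (D t rr r0 : ℝ) (hD : 0 < D) (hrr : 0 < rr) (hr0 : rr < r0) :
    4 * π * rr ^ 2 * D *
      deriv (fun r : ℝ =>
        1 / (4 * π * r * r0) * (1 / Real.sqrt (4 * π * D * t)) *
          (Real.exp (-(r - r0) ^ 2 / (4 * D * t)) -
            Real.exp (-(r + r0 - 2 * rr) ^ 2 / (4 * D * t)))) rr =
      (rr / r0) * (1 / Real.sqrt (4 * π * D * t)) * ((r0 - rr) / t) *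
        Real.exp (-(r0 - rr) ^ 2 / (4 * D * t)) := by
  have hr0_pos : 0 < r0 := hrr.trans hr0
  have hprefactor :
      ContinuousAt (fun r : ℝ => 1 / (4 * π * r * r0) * (1 / √(4 * π * D * t))) rr := by
    have : 4 * π * rr * r0 ≠ 0 := by positivity
    fun_prop (disch := assumption)
  have hK := HasDerivAt.mul_of_continuousAt_of_eq_zero
    (hasDerivAt_exp_neg_sq_sub_div_sub_reflect r0 rr (4 * D * t)) hprefactor
    (exp_neg_sq_sub_div_sub_reflect_self r0 rr _)
  rw [hK.deriv]
  field_simp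

/-- The absorption rate `K(t|r₀) = 4π r_r² D ∂C/∂r |_{r=r_r}` for the diffusion
Green's function outside a fully absorbing sphere. -/
theorem absorption_rate_eq
    (D t rr r0 : ℝ) (hD : 0 < D) (ht : 0 < t) (hrr : 0 < rr) (hr0 : rr < r0) :
    4 * π * rr ^ 2 * D *
      deriv (fun r : ℝ =>
        1 / (4 * π * r * r0) * (1 / Real.sqrt (4 * π * D * t)) *
          (Real.exp (-(r - r0) ^ 2 / (4 * D * t)) -
            Real.exp (-(r + r0 - 2 * rr) ^ 2 / (4 * D * t)))) rr =
      (rr / r0) * (1 / Real.sqrt (4 * π * D * t)) * ((r0 - rr) / t) *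
        Real.exp (-(r0 - rr) ^ 2 / (4 * D * t)) :=
  absorption_rate_eq_general D t rr r0 hD hrr hr0
end

section
/- For D > 0, r_r > 0, λ > 0, N > 0, 0 ≤ t, T > 0, the integral 4πλN ∫_{r_r}^∞ [ (r_r/r)·erfc((r−r_r)/√(4D(t+T))) − (r_r/r)·erfc((r−r_r)/√(4Dt)) ]·r² dr equals 4√π·λ·N·r_r·[ D√π·T + 2√D·r_r·(√(t+T) − √t) ]. -/
open Real MeasureTheory

/-- The complementary error function `erfc x = (2/√π) ∫_x^∞ e^{−u²} du`. -/
noncomputable def erfc (x : ℝ) : ℝ :=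
  (2 / Real.sqrt π) * ∫ u in Set.Ioi x, Real.exp (-u ^ 2)

open Set Filter Topology

/-!
Cancelling `r ^ 2` against `rr / r` leaves `rr * ∫_{rr}^∞ r * erfc ((r - rr) / a)` with
`a = √(4 D s)`. Under `y = (r - rr) / a` the weight `r` becomes `a * y + rr`, and
`(a * y + rr) * erfc y` has an explicit primitive built from `erfc` and `exp (-y ^ 2)`.
The Gaussian tail bound `erfc y ≤ exp (-y ^ 2)` kills it at infinity, so the integral is
`a ^ 2 / 4 + a * rr / √π`; as the integrand is nonnegative, integrability comes with the
fundamental theorem of calculus. Taking the difference of the values at `s = t + T` and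
`s = t` gives the formula.
-/

lemma integrable_exp_neg_sq : Integrable fun u : ℝ => exp (-u ^ 2) := by
  simpa using integrable_exp_neg_mul_sq one_pos

lemma integral_Ioi_exp_neg_sq : ∫ u in Ioi (0 : ℝ), exp (-u ^ 2) = √π / 2 := by
  simpa using integral_gaussian_Ioi 1

lemma erfc_eq_one_sub (x : ℝ) : erfc x = 1 - 2 / √π * ∫ u in (0 : ℝ)..x, exp (-u ^ 2) := by
  have h := intervalIntegral.integral_interval_add_Ioi (a := 0) (b := x)
    integrable_exp_neg_sq.integrableOn integrable_exp_neg_sq.integrableOn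
  rw [integral_Ioi_exp_neg_sq] at h
  rw [erfc, eq_sub_of_add_eq' h]
  field_simp

lemma hasDerivAt_erfc (x : ℝ) : HasDerivAt erfc (-(2 / √π) * exp (-x ^ 2)) x := by
  rw [funext erfc_eq_one_sub]
  simpa using ((continuous_exp.comp (continuous_pow 2).neg).integral_hasStrictDerivAt 0 x
    |>.hasDerivAt.const_mul (2 / √π)).const_sub 1

lemma erfc_zero : erfc 0 = 1 := by
  simp [erfc_eq_one_sub]

lemma erfc_nonneg (x : ℝ) : 0 ≤ erfc x :=
  mul_nonneg (by positivity) (setIntegral_nonneg measurableSet_Ioi fun _ _ => (exp_pos _).le)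

lemma setIntegral_Ioi_comp_sub_right (g : ℝ → ℝ) (x : ℝ) :
    ∫ u in Ioi x, g (u - x) = ∫ u in Ioi 0, g u := by
  have := (measurePreserving_sub_right volume x).setIntegral_preimage_emb
    (measurableEmbedding_subRight x) g (Ioi 0)
  simpa using this

lemma erfc_le_exp_neg_sq {x : ℝ} (hx : 0 ≤ x) : erfc x ≤ exp (-x ^ 2) := by
  have hshift :
      ∫ u in Ioi x, exp (-u ^ 2) ≤ ∫ u in Ioi x, exp (-x ^ 2) * exp (-(u - x) ^ 2) := by
    refine setIntegral_mono_on integrable_exp_neg_sq.integrableOn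
      ((integrable_exp_neg_sq.comp_sub_right x).const_mul _).integrableOn measurableSet_Ioi
      fun u hu => ?_
    rw [← exp_add, exp_le_exp]
    nlinarith [hu.out.le]
  rw [integral_const_mul, setIntegral_Ioi_comp_sub_right (fun u => exp (-u ^ 2)),
    integral_Ioi_exp_neg_sq] at hshift
  calc erfc x ≤ 2 / √π * (exp (-x ^ 2) * (√π / 2)) := by
        rw [erfc]; gcongr
    _ = exp (-x ^ 2) := by field_simp

lemma tendsto_pow_mul_exp_neg_sq_atTop (n : ℕ) :
    Tendsto (fun y : ℝ => y ^ n * exp (-y ^ 2)) atTop (𝓝 0) := by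
  refine squeeze_zero' ?_ ?_ (tendsto_pow_mul_exp_neg_atTop_nhds_zero n)
  · filter_upwards [eventually_ge_atTop 0] with y hy
    positivity
  · filter_upwards [eventually_ge_atTop 1] with y hy
    gcongr
    nlinarith

lemma tendsto_pow_mul_erfc_atTop (n : ℕ) :
    Tendsto (fun y : ℝ => y ^ n * erfc y) atTop (𝓝 0) := by
  refine squeeze_zero' ?_ ?_ (tendsto_pow_mul_exp_neg_sq_atTop n)
  · filter_upwards [eventually_ge_atTop 0] with y hy
    exact mul_nonneg (by positivity) (erfc_nonneg y)
  · filter_upwards [eventually_ge_atTop 0] with y hy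
    gcongr
    exact erfc_le_exp_neg_sq hy

noncomputable def erfcLinearPrimitive (a c y : ℝ) : ℝ :=
  a * ((y ^ 2 / 2 - 1 / 4) * erfc y - y * exp (-y ^ 2) / (2 * √π)) +
    c * (y * erfc y - exp (-y ^ 2) / √π)

lemma hasDerivAt_erfcLinearPrimitive (a c y : ℝ) :
    HasDerivAt (erfcLinearPrimitive a c) ((a * y + c) * erfc y) y := by
  have hexp : HasDerivAt (fun y : ℝ => exp (-y ^ 2)) (exp (-y ^ 2) * -(2 * y)) y := by
    simpa using ((hasDerivAt_pow 2 y).neg).exp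
  have hid := hasDerivAt_id y
  have hsq : HasDerivAt (fun y : ℝ => y ^ 2 / 2 - 1 / 4) y y := by
    simpa using ((hasDerivAt_pow 2 y).div_const 2).sub_const (1 / 4)
  refine ((((hsq.mul (hasDerivAt_erfc y)).sub ((hid.mul hexp).div_const (2 * √π))).const_mul
    a).add (((hid.mul (hasDerivAt_erfc y)).sub (hexp.div_const √π)).const_mul c)).congr_deriv ?_
  simp only [id]
  field_simp
  ring

lemma erfcLinearPrimitive_zero (a c : ℝ) : erfcLinearPrimitive a c 0 = -(a / 4 + c / √π) := by
  simp only [erfcLinearPrimitive, erfc_zero, ne_eq, OfNat.ofNat_ne_zero, not_false_eq_true,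
    zero_pow, neg_zero, exp_zero]
  ring

lemma tendsto_erfcLinearPrimitive_atTop (a c : ℝ) :
    Tendsto (erfcLinearPrimitive a c) atTop (𝓝 0) := by
  have h := ((((tendsto_pow_mul_erfc_atTop 2).div_const 2).sub
    ((tendsto_pow_mul_erfc_atTop 0).div_const 4)).sub
    ((tendsto_pow_mul_exp_neg_sq_atTop 1).div_const (2 * √π))).const_mul a |>.add
    ((((tendsto_pow_mul_erfc_atTop 1).sub
    ((tendsto_pow_mul_exp_neg_sq_atTop 0).div_const √π))).const_mul c)
  simp only [zero_div, sub_zero, mul_zero, add_zero] at h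
  refine h.congr fun y => ?_
  simp only [erfcLinearPrimitive]
  ring

lemma hasDerivAt_erfcLinearPrimitive_comp (c : ℝ) {a : ℝ} (ha : a ≠ 0) (r : ℝ) :
    HasDerivAt (fun r => a * erfcLinearPrimitive a c ((r - c) / a))
      (r * erfc ((r - c) / a)) r := by
  have hy : HasDerivAt (fun r => (r - c) / a) (1 / a) r := by
    simpa using ((hasDerivAt_id r).sub_const c).div_const a
  refine ((hasDerivAt_erfcLinearPrimitive a c _).comp r hy |>.const_mul a).congr_deriv ?_
  field_simp
  ring

lemma tendsto_erfcLinearPrimitive_comp_atTop (c : ℝ) {a : ℝ} (ha : 0 < a) :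
    Tendsto (fun r => a * erfcLinearPrimitive a c ((r - c) / a)) atTop (𝓝 0) := by
  have hy : Tendsto (fun r => (r - c) / a) atTop atTop :=
    (tendsto_atTop_add_const_right _ (-c) tendsto_id).atTop_div_const ha
  simpa using ((tendsto_erfcLinearPrimitive_atTop a c).comp hy).const_mul a

lemma mul_erfc_div_nonneg {a c r : ℝ} (hc : 0 ≤ c) (hr : r ∈ Ioi c) :
    0 ≤ r * erfc ((r - c) / a) :=
  mul_nonneg (hc.trans hr.out.le) (erfc_nonneg _)

lemma integrableOn_Ioi_mul_erfc_div {a c : ℝ} (ha : 0 < a) (hc : 0 ≤ c) :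
    IntegrableOn (fun r => r * erfc ((r - c) / a)) (Ioi c) :=
  integrableOn_Ioi_deriv_of_nonneg' (fun r _ => hasDerivAt_erfcLinearPrimitive_comp c ha.ne' r)
    (fun _ hr => mul_erfc_div_nonneg hc hr) (tendsto_erfcLinearPrimitive_comp_atTop c ha)

lemma integral_Ioi_mul_erfc_div {a c : ℝ} (ha : 0 < a) (hc : 0 ≤ c) :
    ∫ r in Ioi c, r * erfc ((r - c) / a) = a ^ 2 / 4 + a * c / √π := by
  rw [integral_Ioi_of_hasDerivAt_of_nonneg'
    (fun r _ => hasDerivAt_erfcLinearPrimitive_comp c ha.ne' r)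
    (fun _ hr => mul_erfc_div_nonneg hc hr) (tendsto_erfcLinearPrimitive_comp_atTop c ha)]
  simp only [sub_self, zero_div, erfcLinearPrimitive_zero]
  ring

lemma eqOn_absorption_profile {a c : ℝ} (hc : 0 ≤ c) :
    EqOn (fun r => c / r * erfc ((r - c) / a) * r ^ 2) (fun r => c * (r * erfc ((r - c) / a)))
      (Ioi c) := by
  intro r hr
  have : r ≠ 0 := (hc.trans_lt hr).ne'
  field_simp

lemma integrableOn_absorption_profile {a c : ℝ} (ha : 0 < a) (hc : 0 ≤ c) :
    IntegrableOn (fun r => c / r * erfc ((r - c) / a) * r ^ 2) (Ioi c) :=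
  IntegrableOn.congr_fun ((integrableOn_Ioi_mul_erfc_div ha hc).const_mul c)
    (eqOn_absorption_profile hc).symm measurableSet_Ioi

lemma integral_absorption_profile {D s c : ℝ} (hD : 0 < D) (hs : 0 < s) (hc : 0 ≤ c) :
    ∫ r in Ioi c, c / r * erfc ((r - c) / √(4 * D * s)) * r ^ 2 =
      c * (D * s + 2 * √D * c * √s / √π) := by
  have ha : 0 < √(4 * D * s) := by positivity
  rw [setIntegral_congr_fun measurableSet_Ioi (eqOn_absorption_profile hc), integral_const_mul,
    integral_Ioi_mul_erfc_div ha hc, sq_sqrt (by positivity), sqrt_mul (by positivity),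
    sqrt_mul (by norm_num), show √(4 : ℝ) = 2 by norm_num]
  ring

theorem expected_net_absorption_general
    (D rr lam N t T : ℝ) (hD : 0 < D) (hrr : 0 < rr)
    (ht : 0 ≤ t) (hT : 0 < T) :
    4 * π * lam * N *
      (∫ r in Set.Ioi rr,
        ((rr / r) * erfc ((r - rr) / Real.sqrt (4 * D * (t + T))) -
          (if t = 0 then 0 else (rr / r) * erfc ((r - rr) / Real.sqrt (4 * D * t)))) * r ^ 2) =
      4 * Real.sqrt π * lam * N * rr *
        (D * Real.sqrt π * T + 2 * Real.sqrt D * rr * (Real.sqrt (t + T) - Real.sqrt t)) := by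
  have hπ : π = √π ^ 2 := (sq_sqrt pi_pos.le).symm
  have hsπ : √π ≠ 0 := by positivity
  rcases ht.eq_or_lt with rfl | ht
  · simp only [if_pos, sub_zero, zero_add, sqrt_zero]
    rw [integral_absorption_profile hD hT hrr.le]
    nth_rw 1 [hπ]
    field_simp
  · simp only [if_neg ht.ne', sub_mul]
    rw [integral_sub (integrableOn_absorption_profile (by positivity) hrr.le)
        (integrableOn_absorption_profile (by positivity) hrr.le),
      integral_absorption_profile hD (by positivity) hrr.le,
      integral_absorption_profile hD ht hrr.le]
    nth_rw 1 [hπ]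
    field_simp
    ring

/-- Expected net number of molecules absorbed during `[t, t+T]` by a fully
absorbing sphere of radius `r_r` from a Poisson field of density `λ`
(no degradation); the term for `t = 0` is interpreted as `0`. -/
theorem expected_net_absorption
    (D rr lam N t T : ℝ) (hD : 0 < D) (hrr : 0 < rr) (hlam : 0 < lam)
    (hN : 0 < N) (ht : 0 ≤ t) (hT : 0 < T) :
    4 * π * lam * N *
      (∫ r in Set.Ioi rr,
        ((rr / r) * erfc ((r - rr) / Real.sqrt (4 * D * (t + T))) -
          (if t = 0 then 0 else (rr / r) * erfc ((r - rr) / Real.sqrt (4 * D * t)))) * r ^ 2) =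
      4 * Real.sqrt π * lam * N * rr *
        (D * Real.sqrt π * T + 2 * Real.sqrt D * rr * (Real.sqrt (t + T) - Real.sqrt t)) :=
  expected_net_absorption_general D rr lam N t T hD hrr ht hT
end
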